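/- Let V be a weighted digraph and suppose φ_{k-1} - φ_k > φ_k - φ_{k+1}. Let i and j be vertices that are each a root of some minimal-weight spanning k-forest (marked vertices of level k). If i is accessible from j in some minimal-weight spanning k-forest, then j is accessible from i in some minimal-weight spanning k-forest, and moreover in every minimal-weight spanning k-forest the vertices i and j belong to the same tree. -/

import Mathlib

open Relation

/-- The arc relation of a functional digraph: `F i = some j` means there is an arc `i → j`. -/
def Arc {V : Type*} (F : V → Option V) (i j : V) : Prop := F i = some j

/-- A directed forest: a functional digraph (out-degree ≤ 1) without directed circuits. -/
def IsForest {V : Type*} (F : V → Option V) : Prop :=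
  ∀ i, ¬ Relation.TransGen (Arc F) i i

/-- `j` is accessible from `i` by a directed walk. -/
def Reaches {V : Type*} (F : V → Option V) (i j : V) : Prop :=
  Relation.ReflTransGen (Arc F) i j

open Classical in
/-- The `D`-exchange of `F` by `G`: replace the outgoing arcs (in `F`) of vertices of `D`
by their outgoing arcs in `G`. -/
noncomputable def exchange {V : Type*} (D : Set V) (F G : V → Option V) : V → Option V :=
  fun i => if i ∈ D then G i else F i

/-- The set of vertices of the tree of the forest `F` with root `r`. -/
def treeSet {V : Type*} (F : V → Option V) (r : V) : Set V := {i | Reaches F i r}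

section Weighted

variable {V : Type*} [Fintype V] [DecidableEq V]

/-- A spanning forest of the digraph with arc relation `A`. -/
def IsSpanningForest (A : V → V → Prop) (F : V → Option V) : Prop :=
  IsForest F ∧ ∀ i j, F i = some j → A i j

/-- The number of trees (= roots) of a forest. -/
def numTrees (F : V → Option V) : ℕ :=
  (Finset.univ.filter (fun i => F i = none)).card

/-- The weight of a forest: the sum of the weights of its arcs. -/
noncomputable def weight (w : V → V → ℝ) (F : V → Option V) : ℝ :=
  ∑ i, (F i).elim 0 (w i)

/-- `F` is a minimal-weight (extreme) spanning forest with `k` trees. -/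
def ExtremeForest (A : V → V → Prop) (w : V → V → ℝ) (k : ℕ) (F : V → Option V) : Prop :=
  IsSpanningForest A F ∧ numTrees F = k ∧
    ∀ G, IsSpanningForest A G → numTrees G = k → weight w F ≤ weight w G

/-- `φ_k`: the minimum weight of a spanning forest with exactly `k` trees. -/
noncomputable def phi (A : V → V → Prop) (w : V → V → ℝ) (k : ℕ) : ℝ :=
  sInf (weight w '' {F | IsSpanningForest A F ∧ numTrees F = k})

end Weighted

section Algebras

variable {V : Type*} [Fintype V] [DecidableEq V]

/-- The generating family of `A_k`: vertex sets of trees of minimal-weight spanning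
`k`-forests. -/
def genSets (A : V → V → Prop) (w : V → V → ℝ) (k : ℕ) : Set (Set V) :=
  {S | ∃ F r, ExtremeForest A w k F ∧ F r = none ∧ S = treeSet F r}

/-- The algebra `A_k` of subsets of the vertex set generated by the vertex sets of trees of
minimal-weight spanning `k`-forests. -/
noncomputable def alg (A : V → V → Prop) (w : V → V → ℝ) (k : ℕ) : MeasurableSpace V :=
  MeasurableSpace.generateFrom (genSets A w k)

/-- `E` is an elementary set (atom) of the algebra `m`. -/
def IsElementary (m : MeasurableSpace V) (E : Set V) : Prop :=
  @MeasurableSet V m E ∧ E.Nonempty ∧ ∀ S, @MeasurableSet V m S → S ⊆ E → S = ∅ ∨ S = E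

/-- `i` is a marked vertex of level `k`: a root of some minimal-weight spanning `k`-forest. -/
def IsMarked (A : V → V → Prop) (w : V → V → ℝ) (k : ℕ) (i : V) : Prop :=
  ∃ F, ExtremeForest A w k F ∧ F i = none

end Algebras

/-!
Cut two minimal `k`-forests `F` and `G` along the vertex set `D` of a tree of `G`: one forest
takes its arcs in `D` from `G` and outside `D` from `F`, the other the reverse, and their weights
add up to `2 φ_k`. If `D` contained no root of `F`, these would be a `(k+1)`- and a
`(k-1)`-forest, so `φ_{k+1} + φ_{k-1} ≤ 2 φ_k`, contradicting strict convexity. Hence every tree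
of `G` contains a root of `F`, by counting exactly one, and then both cuts are minimal
`k`-forests. Consequently, if a root `x` of `F` and a root `r` of `G` lie in one tree of a third
minimal forest, then `x` lies in the tree of `r` in `G`: otherwise the cut would be a minimal
forest with the two distinct roots `x` and `r` in one tree of that third forest.
-/

open Relation Finset

section Forest

variable {V : Type*} {A : V → V → Prop} {F G : V → Option V}

lemma arc_rightUnique (F : V → Option V) : Relator.RightUnique (Arc F) :=
  fun _ _ _ hb hc => Option.some_injective _ (hb.symm.trans hc)

lemma Reaches.eq_of_root {x y : V} (hxy : Reaches F x y) (hx : F x = none) : x = y := by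
  rcases hxy.cases_head with h | ⟨c, hc, -⟩
  · exact h
  · exact nomatch hx.symm.trans hc

lemma Reaches.root_unique {x a b : V} (ha : Reaches F x a) (ha' : F a = none)
    (hb : Reaches F x b) (hb' : F b = none) : a = b := by
  rcases ReflTransGen.total_of_right_unique (arc_rightUnique F) ha hb with hab | hba
  · exact Reaches.eq_of_root hab ha'
  · exact (Reaches.eq_of_root hba hb').symm

lemma Reaches.of_arc {x y r : V} (hxr : Reaches F x r) (hr : F r = none)
    (hxy : F x = some y) : Reaches F y r := by
  rcases hxr.cases_head with rfl | ⟨c, hc, hcr⟩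
  · exact nomatch hr.symm.trans hxy
  · rwa [arc_rightUnique F hxy hc]

lemma IsForest.exists_root [Finite V] (hF : IsForest F) (x : V) :
    ∃ r, Reaches F x r ∧ F r = none := by
  have : IsTrans V (flip (TransGen (Arc F))) := ⟨fun _ _ _ h₁ h₂ => h₂.trans h₁⟩
  have : Std.Irrefl (flip (TransGen (Arc F))) := ⟨hF⟩
  have wf : WellFounded (flip (Arc F)) :=
    Subrelation.wf (r := flip (TransGen (Arc F))) (fun h => TransGen.single h)
      (Finite.wellFounded_of_trans_of_irrefl _)
  induction x using wf.induction with
  | _ x ih =>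
    cases hx : F x with
    | none => exact ⟨x, ReflTransGen.refl, hx⟩
    | some y =>
      obtain ⟨r, hyr, hr⟩ := ih y hx
      exact ⟨r, ReflTransGen.head hx hyr, hr⟩

lemma exchange_of_mem {D : Set V} {x : V} (hx : x ∈ D) : exchange D F G x = G x := if_pos hx

lemma exchange_of_not_mem {D : Set V} {x : V} (hx : x ∉ D) : exchange D F G x = F x := if_neg hx

/-- A walk of the exchange that enters `S` stays in `S` and follows `G` there; before that it
follows `F`. -/
lemma isForest_exchange {S : Set V} (hF : IsForest F) (hG : IsForest G)
    (hS : ∀ x ∈ S, ∀ y, G x = some y → y ∈ S) : IsForest (exchange S F G) := by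
  have inside : ∀ {x y}, TransGen (Arc (exchange S F G)) x y → x ∈ S →
      TransGen (Arc G) x y ∧ y ∈ S := by
    intro x y h hx
    induction h with
    | single h =>
      rw [Arc, exchange_of_mem hx] at h
      exact ⟨TransGen.single h, hS _ hx _ h⟩
    | tail _ h ih =>
      rw [Arc, exchange_of_mem ih.2] at h
      exact ⟨ih.1.tail h, hS _ ih.2 _ h⟩
  have outside : ∀ {x y}, TransGen (Arc (exchange S F G)) x y → y ∉ S →
      TransGen (Arc F) x y ∧ x ∉ S := by
    intro x y h hy
    induction h with
    | single h =>
      have hx : x ∉ S := fun hx => hy (hS _ hx _ (by rwa [Arc, exchange_of_mem hx] at h))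
      rw [Arc, exchange_of_not_mem hx] at h
      exact ⟨TransGen.single h, hx⟩
    | @tail b _ _ h ih =>
      have hb : b ∉ S := fun hb => hy (hS _ hb _ (by rwa [Arc, exchange_of_mem hb] at h))
      rw [Arc, exchange_of_not_mem hb] at h
      exact ⟨(ih hb).1.tail h, (ih hb).2⟩
  intro x hcyc
  by_cases hx : x ∈ S
  · exact hG x (inside hcyc hx).1
  · exact hF x (outside hcyc hx).1

lemma treeSet_arc_closed {r x y : V} (hr : G r = none) (hx : x ∈ treeSet G r)
    (hxy : G x = some y) : y ∈ treeSet G r :=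
  Reaches.of_arc hx hr hxy

lemma treeSet_compl_arc_closed {r x y : V} (hx : x ∈ (treeSet G r)ᶜ)
    (hxy : G x = some y) : y ∈ (treeSet G r)ᶜ :=
  fun hy => hx (ReflTransGen.head hxy hy)

lemma isSpanningForest_exchange {D : Set V} (hF : IsSpanningForest A F)
    (hG : IsSpanningForest A G) (hD : IsForest (exchange D F G)) :
    IsSpanningForest A (exchange D F G) := by
  refine ⟨hD, fun i j hij => ?_⟩
  by_cases hi : i ∈ D
  · rw [exchange_of_mem hi] at hij
    exact hG.2 i j hij
  · rw [exchange_of_not_mem hi] at hij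
    exact hF.2 i j hij

lemma isSpanningForest_exchange_treeSet {r : V} (hF : IsSpanningForest A F)
    (hG : IsSpanningForest A G) (hr : G r = none) :
    IsSpanningForest A (exchange (treeSet G r) F G) :=
  isSpanningForest_exchange hF hG
    (isForest_exchange hF.1 hG.1 fun _ hx _ => treeSet_arc_closed hr hx)

lemma isSpanningForest_exchange_compl_treeSet {r : V} (hF : IsSpanningForest A F)
    (hG : IsSpanningForest A G) :
    IsSpanningForest A (exchange (treeSet G r)ᶜ F G) :=
  isSpanningForest_exchange hF hG
    (isForest_exchange hF.1 hG.1 fun _ hx _ => treeSet_compl_arc_closed hx)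

end Forest

section Weighted

open Classical

variable {V : Type*} [Fintype V] {A : V → V → Prop} {w : V → V → ℝ} {k m : ℕ}
  {F G : V → Option V}

def roots (F : V → Option V) : Finset V := univ.filter (F · = none)

@[simp]
lemma mem_roots {x : V} : x ∈ roots F ↔ F x = none := by simp [roots]

lemma numTrees_eq_card_roots (F : V → Option V) : numTrees F = #(roots F) := rfl

lemma numTrees_exchange (D : Set V) (F G : V → Option V) :
    numTrees (exchange D F G) = #((roots G).filter (· ∈ D)) + #((roots F).filter (· ∉ D)) := by
  rw [numTrees_eq_card_roots, ← card_union_of_disjoint]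
  · congr 1
    ext x
    by_cases hx : x ∈ D <;> simp [exchange, hx]
  · rw [disjoint_left]
    intro x hG hF
    exact (mem_filter.1 hF).2 (mem_filter.1 hG).2

lemma card_roots_filter_mem_treeSet {r : V} (hr : G r = none) :
    #((roots G).filter (· ∈ treeSet G r)) = 1 := by
  rw [card_eq_one]
  refine ⟨r, ext fun x => ?_⟩
  simp only [mem_filter, mem_roots, mem_singleton]
  constructor
  · rintro ⟨hx, hxr⟩
    exact Reaches.eq_of_root hxr hx
  · rintro rfl
    exact ⟨hr, ReflTransGen.refl⟩

lemma numTrees_exchange_treeSet {r : V} (hr : G r = none) :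
    numTrees (exchange (treeSet G r) F G) + #((roots F).filter (· ∈ treeSet G r)) =
      numTrees F + 1 := by
  have := card_filter_add_card_filter_not (s := roots F) (· ∈ treeSet G r)
  rw [numTrees_exchange, card_roots_filter_mem_treeSet hr, numTrees_eq_card_roots]
  omega

lemma numTrees_exchange_compl_treeSet {r : V} (hr : G r = none) :
    numTrees (exchange (treeSet G r)ᶜ F G) + 1 =
      numTrees G + #((roots F).filter (· ∈ treeSet G r)) := by
  have := card_filter_add_card_filter_not (s := roots G) (· ∈ treeSet G r)
  rw [numTrees_exchange, numTrees_eq_card_roots]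
  simp only [Set.mem_compl_iff, not_not]
  rw [card_roots_filter_mem_treeSet hr] at this
  omega

lemma weight_exchange_add_weight_exchange_compl (D : Set V) (F G : V → Option V) :
    weight w (exchange D F G) + weight w (exchange Dᶜ F G) = weight w F + weight w G := by
  simp only [weight, ← sum_add_distrib]
  refine sum_congr rfl fun x _ => ?_
  by_cases hx : x ∈ D
  · simp [exchange, hx, add_comm]
  · simp [exchange, hx]

lemma phi_le_weight (hF : IsSpanningForest A F) (hm : numTrees F = m) :
    phi A w m ≤ weight w F :=
  csInf_le ((Set.toFinite _).image _).bddBelow ⟨F, ⟨hF, hm⟩, rfl⟩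

lemma ExtremeForest.weight_eq (hF : ExtremeForest A w k F) : weight w F = phi A w k := by
  refine le_antisymm ?_ (phi_le_weight hF.1 hF.2.1)
  have hne : (weight w '' {F | IsSpanningForest A F ∧ numTrees F = k}).Nonempty :=
    ⟨weight w F, F, ⟨hF.1, hF.2.1⟩, rfl⟩
  obtain ⟨G, ⟨hG, hGk⟩, hGw⟩ := hne.csInf_mem ((Set.toFinite _).image _)
  rw [phi, ← hGw]
  exact hF.2.2 G hG hGk

lemma extremeForest_of_weight_le (hF : IsSpanningForest A F) (hk : numTrees F = k)
    (hw : weight w F ≤ phi A w k) : ExtremeForest A w k F :=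
  ⟨hF, hk, fun _ hG hGk => hw.trans (phi_le_weight hG hGk)⟩

end Weighted

section StrictConvexity

open Classical

variable {V : Type*} [Fintype V] {A : V → V → Prop} {w : V → V → ℝ} {k : ℕ}
  {F G H : V → Option V}

lemma exists_root_reaches_of_extremeForest
    (hlt : phi A w (k - 1) - phi A w k > phi A w k - phi A w (k + 1))
    (hF : ExtremeForest A w k F) (hG : ExtremeForest A w k G) {r : V} (hr : G r = none) :
    ∃ x, F x = none ∧ Reaches G x r := by
  by_contra! h
  have ha : #((roots F).filter (· ∈ treeSet G r)) = 0 := by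
    rw [card_eq_zero, filter_eq_empty_iff]
    exact fun x hx => h x (mem_roots.1 hx)
  have h₁ := numTrees_exchange_treeSet (F := F) hr
  have h₂ := numTrees_exchange_compl_treeSet (F := F) hr
  rw [ha, hF.2.1] at h₁
  rw [ha, hG.2.1] at h₂
  have hw₁ : phi A w (k + 1) ≤ weight w (exchange (treeSet G r) F G) :=
    phi_le_weight (isSpanningForest_exchange_treeSet hF.1 hG.1 hr) (by omega)
  have hw₂ : phi A w (k - 1) ≤ weight w (exchange (treeSet G r)ᶜ F G) :=
    phi_le_weight (isSpanningForest_exchange_compl_treeSet hF.1 hG.1) (by omega)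
  have hsum := weight_exchange_add_weight_exchange_compl (w := w) (treeSet G r) F G
  rw [hF.weight_eq, hG.weight_eq] at hsum
  linarith

/-- Every tree of `G` contains a root of `F` and both have `k` roots, so the map sending a root of
`F` to the root of its tree in `G` is a bijection. -/
lemma eq_of_roots_reach_common
    (hlt : phi A w (k - 1) - phi A w k > phi A w k - phi A w (k + 1))
    (hF : ExtremeForest A w k F) (hG : ExtremeForest A w k G) {x y s : V}
    (hx : F x = none) (hy : F y = none) (hxs : Reaches G x s) (hys : Reaches G y s) :
    x = y := by
  choose ρ hρ using hG.1.1.exists_root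
  have hρ_eq : ∀ {x r}, Reaches G x r → G r = none → ρ x = r :=
    fun hxr hr => Reaches.root_unique (hρ _).1 (hρ _).2 hxr hr
  refine inj_on_of_surj_on_of_card_le (s := roots F) (t := roots G) (fun x _ => ρ x)
    (fun x _ => mem_roots.2 (hρ x).2) (fun r hr => ?_) ?_ (mem_roots.2 hx) (mem_roots.2 hy) ?_
  · obtain ⟨x, hx, hxr⟩ := exists_root_reaches_of_extremeForest hlt hF hG (mem_roots.1 hr)
    exact ⟨x, mem_roots.2 hx, hρ_eq hxr (mem_roots.1 hr)⟩
  · exact (hF.2.1.trans hG.2.1.symm).le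
  · obtain ⟨t, hst, ht⟩ := hG.1.1.exists_root s
    exact (hρ_eq (hxs.trans hst) ht).trans (hρ_eq (hys.trans hst) ht).symm

lemma extremeForest_exchange_treeSet
    (hlt : phi A w (k - 1) - phi A w k > phi A w k - phi A w (k + 1))
    (hF : ExtremeForest A w k F) (hG : ExtremeForest A w k G) {r : V} (hr : G r = none) :
    ExtremeForest A w k (exchange (treeSet G r) F G) := by
  have ha : #((roots F).filter (· ∈ treeSet G r)) = 1 := by
    obtain ⟨x, hx, hxr⟩ := exists_root_reaches_of_extremeForest hlt hF hG hr
    refine le_antisymm (card_le_one.2 fun y hy z hz => ?_) (card_pos.2 ⟨x, mem_filter.2 ⟨mem_roots.2 hx, hxr⟩⟩)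
    rw [mem_filter, mem_roots] at hy hz
    exact eq_of_roots_reach_common hlt hF hG hy.1 hz.1 hy.2 hz.2
  have h₁ := numTrees_exchange_treeSet (F := F) hr
  have h₂ := numTrees_exchange_compl_treeSet (F := F) hr
  rw [ha, hF.2.1] at h₁
  rw [ha, hG.2.1] at h₂
  have hw₂ : phi A w k ≤ weight w (exchange (treeSet G r)ᶜ F G) :=
    phi_le_weight (isSpanningForest_exchange_compl_treeSet hF.1 hG.1) (by omega)
  have hsum := weight_exchange_add_weight_exchange_compl (w := w) (treeSet G r) F G
  rw [hF.weight_eq, hG.weight_eq] at hsum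
  exact extremeForest_of_weight_le (isSpanningForest_exchange_treeSet hF.1 hG.1 hr) (by omega)
    (by linarith)

lemma reaches_of_roots_reach_common
    (hlt : phi A w (k - 1) - phi A w k > phi A w k - phi A w (k + 1))
    (hF : ExtremeForest A w k F) (hG : ExtremeForest A w k G) (hH : ExtremeForest A w k H)
    {x r s : V} (hx : F x = none) (hr : G r = none) (hxs : Reaches H x s)
    (hrs : Reaches H r s) : Reaches G x r := by
  by_contra hxr
  have hrr : r ∈ treeSet G r := ReflTransGen.refl
  have hxr_eq : x = r :=
    eq_of_roots_reach_common hlt (extremeForest_exchange_treeSet hlt hF hG hr) hH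
      (by rwa [exchange_of_not_mem (D := treeSet G r) hxr]) (by rwa [exchange_of_mem hrr]) hxs hrs
  exact hxr (hxr_eq ▸ hrr)

end StrictConvexity

theorem marked_mutually_attainable_general {V : Type*} [Fintype V]
    (A : V → V → Prop) (w : V → V → ℝ) (k : ℕ)
    (hlt : phi A w (k - 1) - phi A w k > phi A w k - phi A w (k + 1))
    (i j : V) (hi : IsMarked A w k i) (hj : IsMarked A w k j)
    (hacc : ∃ F, ExtremeForest A w k F ∧ Reaches F j i) :
    (∃ G, ExtremeForest A w k G ∧ Reaches G i j) ∧
      ∀ H, ExtremeForest A w k H → ∃ r, H r = none ∧ Reaches H i r ∧ Reaches H j r := by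
  obtain ⟨Fi, hFi, hi⟩ := hi
  obtain ⟨Fj, hFj, hj⟩ := hj
  obtain ⟨F₀, hF₀, hji⟩ := hacc
  have hij : Reaches Fj i j :=
    reaches_of_roots_reach_common hlt hFi hFj hF₀ hi hj ReflTransGen.refl hji
  refine ⟨⟨Fj, hFj, hij⟩, fun H hH => ?_⟩
  obtain ⟨ri, hiri, hri⟩ := hH.1.1.exists_root i
  obtain ⟨rj, hjrj, hrj⟩ := hH.1.1.exists_root j
  have hrj_j : Reaches Fj rj j :=
    reaches_of_roots_reach_common hlt hH hFj hH hrj hj ReflTransGen.refl hjrj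
  have hrj_i : Reaches Fi rj i := reaches_of_roots_reach_common hlt hH hFi hFj hrj hi hrj_j hij
  have hri_i : Reaches Fi ri i :=
    reaches_of_roots_reach_common hlt hH hFi hH hri hi ReflTransGen.refl hiri
  obtain rfl : ri = rj := eq_of_roots_reach_common hlt hH hFi hri hrj hri_i hrj_i
  exact ⟨ri, hri, hiri, hjrj⟩

/-- Under the strict convexity inequality, if marked vertex `i` is attainable from marked
vertex `j` at level `k`, then `j` is attainable from `i` at level `k`, and in every
minimal-weight spanning `k`-forest the vertices `i` and `j` belong to the same tree. -/
theorem marked_mutually_attainable {V : Type*} [Fintype V] [DecidableEq V]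
    (A : V → V → Prop) (w : V → V → ℝ) (k : ℕ)
    (hk : 2 ≤ k) (hk' : k + 1 ≤ Fintype.card V)
    (hEx : ∃ F, IsSpanningForest A F ∧ numTrees F = k - 1)
    (hlt : phi A w (k - 1) - phi A w k > phi A w k - phi A w (k + 1))
    (i j : V) (hi : IsMarked A w k i) (hj : IsMarked A w k j)
    (hacc : ∃ F, ExtremeForest A w k F ∧ Reaches F j i) :
    (∃ G, ExtremeForest A w k G ∧ Reaches G i j) ∧
      ∀ H, ExtremeForest A w k H → ∃ r, H r = none ∧ Reaches H i r ∧ Reaches H j r :=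
  marked_mutually_attainable_general A w k hlt i j hi hj hacc
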